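/- If d divides a_i for all i ≠ j and gcd(d, a_j) = 1, then the d-th truncation satisfies k_a[x_0,...,x_n]^{(d)} = k[x_0,...,x_j^d,...,x_n] with weights (a_0/d, ..., a_j, ..., a_n/d), and hence ℙ(a_0,...,a_n) ≅ ℙ(a_0/d,...,a_j,...,a_n/d). -/

import Mathlib

/-!
A monomial `x^e` has weighted degree `∑ eᵢ aᵢ ≡ e_j a_j (mod d)`, so, `a_j` being prime to `d`, its
degree is divisible by `d` exactly when `d ∣ e_j`, i.e. when it is a monomial in the `x_i` (`i ≠ j`)
and `x_j^d`; dividing the degree by `d` gives the weights `(a_0/d, …, a_j, …, a_n/d)`.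

On points, raising the `j`-th coordinate to the `d`-th power is compatible with the two scaling
actions (`λ` acts through `λ^d`). Over an algebraically closed field it is onto, by extracting a
`d`-th root, and it is injective on orbits: if the images differ by the scalar `μ`, the `j`-th
coordinates differ by some `ν` with `ν^d = μ^{a_j}`, and Bézout for `d` and `a_j` produces `λ`
with `λ^d = μ` and `λ^{a_j} = ν`.
-/

open MvPolynomial

/-- The scaling equivalence on `𝔸^{n+1} ∖ {0}` defining weighted projective space:
`y ~ x` iff `y i = λ ^ (a i) * x i` for some unit `λ`. -/
def wpsRel {k : Type*} [Field k] {n : ℕ} (a : Fin (n + 1) → ℕ)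
    (x y : {v : Fin (n + 1) → k // v ≠ 0}) : Prop :=
  ∃ l : kˣ, ∀ i, y.1 i = (l : k) ^ a i * x.1 i

/-- Weighted projective space `ℙ(a_0, …, a_n)` as the quotient of
`𝔸^{n+1} ∖ {0}` by the weighted scaling action. -/
def WPS (k : Type*) [Field k] {n : ℕ} (a : Fin (n + 1) → ℕ) :=
  Quot (wpsRel (k := k) a)

open Function

theorem isWeightedHomogeneous_iff_forall_mem_support {R M σ : Type*} [CommSemiring R]
    [AddCommMonoid M] {w : σ → M} {φ : MvPolynomial σ R} {m : M} :
    φ.IsWeightedHomogeneous w m ↔ ∀ e ∈ φ.support, Finsupp.weight w e = m :=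
  ⟨fun h _ he => h (mem_support_iff.mp he), fun h _ he => h _ (mem_support_iff.mpr he)⟩

section Weight

variable {σ : Type*} [Fintype σ] [DecidableEq σ] {a : σ → ℕ} {d : ℕ} {j : σ}

theorem dvd_apply_of_dvd_weight (hdvd : ∀ i, i ≠ j → d ∣ a i) (hcop : d.Coprime (a j))
    {e : σ →₀ ℕ} (h : d ∣ Finsupp.weight a e) : d ∣ e j := by
  have hrest : d ∣ ∑ i ∈ Finset.univ.erase j, e i * a i :=
    Finset.dvd_sum fun i hi => (hdvd i (Finset.ne_of_mem_erase hi)).mul_left (e i)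
  rw [Finsupp.weight_eq_sum, ← Finset.add_sum_erase _ _ (Finset.mem_univ j)] at h
  simp only [smul_eq_mul] at h
  exact hcop.dvd_of_dvd_mul_right ((Nat.dvd_add_left hrest).mp h)

theorem weight_eq_mul_sum_div (hdvd : ∀ i, i ≠ j → d ∣ a i) {e : σ →₀ ℕ} (hej : d ∣ e j) :
    Finsupp.weight a e = d * ∑ i, if i = j then a j * (e i / d) else a i / d * e i := by
  rw [Finsupp.weight_eq_sum, Finset.mul_sum]
  refine Finset.sum_congr rfl fun i _ => ?_
  split_ifs with hij
  · subst hij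
    rw [smul_eq_mul, mul_left_comm, Nat.mul_div_cancel' hej, mul_comm]
  · rw [smul_eq_mul, ← mul_assoc, Nat.mul_div_cancel' (hdvd i hij), mul_comm]

theorem weight_eq_mul_iff (hd : 0 < d) (hdvd : ∀ i, i ≠ j → d ∣ a i) (hcop : d.Coprime (a j))
    {e : σ →₀ ℕ} {m : ℕ} :
    Finsupp.weight a e = d * m ↔
      d ∣ e j ∧ (∑ i, if i = j then a j * (e i / d) else a i / d * e i) = m := by
  refine ⟨fun h => ?_, fun ⟨hej, hsum⟩ => by rw [weight_eq_mul_sum_div hdvd hej, hsum]⟩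
  have hej := dvd_apply_of_dvd_weight hdvd hcop (h ▸ dvd_mul_right d m)
  exact ⟨hej, Nat.eq_of_mul_eq_mul_left hd ((weight_eq_mul_sum_div hdvd hej).symm.trans h)⟩

end Weight

theorem exists_pow_eq_and_pow_eq_of_coprime {G : Type*} [CommGroup G] {d m : ℕ}
    (hcop : d.Coprime m) {μ ν : G} (h : ν ^ d = μ ^ m) : ∃ l : G, l ^ d = μ ∧ l ^ m = ν := by
  set s := d.gcdA m
  set t := d.gcdB m
  have hbez : (d : ℤ) * s + m * t = 1 := by
    rw [← Nat.gcd_eq_gcd_ab, hcop.gcd_eq_one, Nat.cast_one]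
  have hνμ : ν ^ (d : ℤ) = μ ^ (m : ℤ) := by simpa only [zpow_natCast] using h
  refine ⟨μ ^ s * ν ^ t, ?_, ?_⟩
  · rw [← zpow_natCast, mul_zpow, ← zpow_mul, ← zpow_mul, mul_comm t, zpow_mul ν, hνμ, ← zpow_mul,
      mul_comm s, ← zpow_add, hbez, zpow_one]
  · rw [← zpow_natCast, mul_zpow, ← zpow_mul, ← zpow_mul, mul_comm s, zpow_mul μ, ← hνμ,
      ← zpow_mul, mul_comm t, ← zpow_add, hbez, zpow_one]

theorem exists_pow_eq_and_eq_mul {k : Type*} [Field k] [IsAlgClosed k] {d : ℕ} (hd : 0 < d)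
    {u : kˣ} {x y : k} (h : y ^ d = u * x ^ d) : ∃ ν : kˣ, ν ^ d = u ∧ y = ν * x := by
  by_cases hx : x = 0
  · have hy : y = 0 := eq_zero_of_pow_eq_zero (n := d) (by simp [h, hx, hd.ne'])
    obtain ⟨c, hc⟩ := IsAlgClosed.exists_pow_nat_eq (u : k) hd
    have hc0 : c ≠ 0 := by rintro rfl; exact u.ne_zero (by simpa [hd.ne'] using hc.symm)
    exact ⟨Units.mk0 c hc0, Units.ext (by simpa using hc), by simp [hx, hy]⟩
  · have hy : y ≠ 0 := fun hy => by simp [hy, hd.ne', hx] at h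
    refine ⟨Units.mk0 (y / x) (div_ne_zero hy hx), Units.ext ?_, by rw [Units.val_mk0, div_mul_cancel₀ y hx]⟩
    simp [div_pow, h, hx]

section WPS

variable {k : Type*} [Field k] {n : ℕ}

theorem wpsRel_equivalence (a : Fin (n + 1) → ℕ) : Equivalence (wpsRel (k := k) a) where
  refl _ := ⟨1, fun _ => by simp⟩
  symm := by
    rintro x y ⟨l, h⟩
    exact ⟨l⁻¹, fun i => by rw [h i, ← mul_assoc, ← mul_pow, ← Units.val_mul, inv_mul_cancel,
      Units.val_one, one_pow, one_mul]⟩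
  trans := by
    rintro x y z ⟨l, h⟩ ⟨l', h'⟩
    exact ⟨l' * l, fun i => by rw [h' i, h i, Units.val_mul, mul_pow, mul_assoc]⟩

def truncWeights (a : Fin (n + 1) → ℕ) (d : ℕ) (j : Fin (n + 1)) : Fin (n + 1) → ℕ :=
  fun i => if i = j then a j else a i / d

def powCoord (j : Fin (n + 1)) (d : ℕ) (x : {v : Fin (n + 1) → k // v ≠ 0}) :
    {v : Fin (n + 1) → k // v ≠ 0} :=
  ⟨update x.1 j (x.1 j ^ d), fun h => by
    obtain ⟨hj, hi⟩ := update_eq_iff.mp h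
    refine x.2 (funext fun i => ?_)
    rcases eq_or_ne i j with rfl | hij
    exacts [eq_zero_of_pow_eq_zero hj, hi i hij]⟩

variable {a : Fin (n + 1) → ℕ} {d : ℕ} {j : Fin (n + 1)}

theorem wpsRel_powCoord (hdvd : ∀ i, i ≠ j → d ∣ a i) {x y : {v : Fin (n + 1) → k // v ≠ 0}}
    (h : wpsRel a x y) : wpsRel (truncWeights a d j) (powCoord j d x) (powCoord j d y) := by
  obtain ⟨l, hl⟩ := h
  refine ⟨l ^ d, fun i => ?_⟩
  rcases eq_or_ne i j with rfl | hij
  · simp only [powCoord, truncWeights, update_self, if_pos, hl i]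
    push_cast
    ring
  · simp only [powCoord, truncWeights, update_of_ne hij, if_neg hij, hl i]
    rw [Units.val_pow_eq_pow_val, ← pow_mul, Nat.mul_div_cancel' (hdvd i hij)]

theorem wpsRel_of_wpsRel_powCoord [IsAlgClosed k] (hd : 0 < d) (hdvd : ∀ i, i ≠ j → d ∣ a i)
    (hcop : d.Coprime (a j)) {x y : {v : Fin (n + 1) → k // v ≠ 0}}
    (h : wpsRel (truncWeights a d j) (powCoord j d x) (powCoord j d y)) : wpsRel a x y := by
  obtain ⟨μ, hμ⟩ := h
  have hμj : y.1 j ^ d = (μ ^ a j : kˣ) * x.1 j ^ d := by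
    simpa [powCoord, truncWeights] using hμ j
  obtain ⟨ν, hνd, hν⟩ := exists_pow_eq_and_eq_mul hd hμj
  obtain ⟨l, hld, hla⟩ := exists_pow_eq_and_pow_eq_of_coprime hcop hνd
  refine ⟨l, fun i => ?_⟩
  rcases eq_or_ne i j with rfl | hij
  · rw [hν, ← hla, Units.val_pow_eq_pow_val]
  · have hμi : y.1 i = (μ : k) ^ (a i / d) * x.1 i := by
      simpa [powCoord, truncWeights, hij] using hμ i
    rw [hμi, ← hld, Units.val_pow_eq_pow_val, ← pow_mul, Nat.mul_div_cancel' (hdvd i hij)]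

theorem powCoord_surjective [IsAlgClosed k] (hd : 0 < d) :
    Surjective (powCoord (k := k) j d) := by
  intro y
  obtain ⟨r, hr⟩ := IsAlgClosed.exists_pow_nat_eq (y.1 j) hd
  refine ⟨⟨update y.1 j r, fun h => y.2 ?_⟩, Subtype.ext ?_⟩
  · obtain ⟨hrj, hi⟩ := update_eq_iff.mp h
    refine funext fun i => ?_
    rcases eq_or_ne i j with rfl | hij
    · simp [← hr, hrj, hd.ne']
    · exact hi i hij
  · simp [powCoord, hr]

def WPS.mapPowCoord (hdvd : ∀ i, i ≠ j → d ∣ a i) : WPS k a → WPS k (truncWeights a d j) :=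
  Quot.map (powCoord j d) fun _ _ => wpsRel_powCoord hdvd

theorem WPS.mapPowCoord_injective [IsAlgClosed k] (hd : 0 < d) (hdvd : ∀ i, i ≠ j → d ∣ a i)
    (hcop : d.Coprime (a j)) : Injective (WPS.mapPowCoord (k := k) hdvd) := by
  rintro ⟨x⟩ ⟨y⟩ h
  exact Quot.sound <| wpsRel_of_wpsRel_powCoord hd hdvd hcop <|
    ((wpsRel_equivalence _).quot_mk_eq_iff _ _).mp h

theorem WPS.mapPowCoord_surjective [IsAlgClosed k] (hd : 0 < d) (hdvd : ∀ i, i ≠ j → d ∣ a i) :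
    Surjective (WPS.mapPowCoord (k := k) hdvd) := by
  rintro ⟨y⟩
  obtain ⟨x, rfl⟩ := powCoord_surjective (j := j) hd y
  exact ⟨Quot.mk _ x, rfl⟩

end WPS

theorem truncation_coprime_weight_general
    {k : Type*} [Field k] [IsAlgClosed k] {n : ℕ}
    (a : Fin (n + 1) → ℕ) (d : ℕ) (hd : 0 < d)
    (j : Fin (n + 1)) (hdvd : ∀ i, i ≠ j → d ∣ a i) (hcop : Nat.gcd d (a j) = 1) :
    (∀ (m : ℕ) (f : MvPolynomial (Fin (n + 1)) k),
      f.IsWeightedHomogeneous a (d * m) ↔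
        ∀ e ∈ f.support, d ∣ e j ∧
          (∑ i : Fin (n + 1),
            if i = j then a j * (e i / d) else (a i / d) * e i) = m) ∧
    Nonempty (WPS k a ≃ WPS k (fun i => if i = j then a j else a i / d)) := by
  refine ⟨fun m f => ?_, ⟨Equiv.ofBijective (WPS.mapPowCoord hdvd)
    ⟨WPS.mapPowCoord_injective hd hdvd hcop, WPS.mapPowCoord_surjective hd hdvd⟩⟩⟩
  rw [isWeightedHomogeneous_iff_forall_mem_support]
  exact forall₂_congr fun e _ => weight_eq_mul_iff hd hdvd hcop

theorem truncation_coprime_weight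
    {k : Type*} [Field k] [IsAlgClosed k] {n : ℕ}
    (a : Fin (n + 1) → ℕ) (ha : ∀ i, 0 < a i) (d : ℕ) (hd : 0 < d)
    (j : Fin (n + 1)) (hdvd : ∀ i, i ≠ j → d ∣ a i) (hcop : Nat.gcd d (a j) = 1) :
    (∀ (m : ℕ) (f : MvPolynomial (Fin (n + 1)) k),
      f.IsWeightedHomogeneous a (d * m) ↔
        ∀ e ∈ f.support, d ∣ e j ∧
          (∑ i : Fin (n + 1),
            if i = j then a j * (e i / d) else (a i / d) * e i) = m) ∧
    Nonempty (WPS k a ≃ WPS k (fun i => if i = j then a j else a i / d)) :=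
  truncation_coprime_weight_general a d hd j hdvd hcop
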